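/- arXiv:0909.2426 — 5 statements merged into one kernel-verified Lean document; each statement's English description precedes it below -/
import Mathlib

section
/- Let v, a, b be real numbers, let λ = √(a² + b²) with λ < 1, let r be a real number, and set α = cosh r, β = sinh r. Define E = e^{2v}(α² + 2aαβ + β²λ²), F = e^{2v}(2bαβ), and G = e^{2v}(α² − 2aαβ + β²λ²). Then E + G + 2√(EG − F²) = 4e^{2v}α² ≠ 0, and the complex dilatation μ = (E − G + 2iF)/(E + G + 2√(EG − F²)) equals tanh(r)·(a + ib). -/
open Complex in
/-- `E + G + 2√(EG - F²) = 4 e^{2v} α² ≠ 0`, and the complex dilatation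
`μ = (E - G + 2iF)/(E + G + 2√(EG - F²))` equals `tanh r · (a + i b)`. -/
theorem stmt_1 (v a b r lam α β E F G : ℝ)
    (hlam : lam = Real.sqrt (a ^ 2 + b ^ 2)) (hlam1 : lam < 1)
    (hα : α = Real.cosh r) (hβ : β = Real.sinh r)
    (hE : E = Real.exp (2 * v) * (α ^ 2 + 2 * a * α * β + β ^ 2 * lam ^ 2))
    (hF : F = Real.exp (2 * v) * (2 * b * α * β))
    (hG : G = Real.exp (2 * v) * (α ^ 2 - 2 * a * α * β + β ^ 2 * lam ^ 2)) :
    E + G + 2 * Real.sqrt (E * G - F ^ 2) = 4 * Real.exp (2 * v) * α ^ 2 ∧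
    4 * Real.exp (2 * v) * α ^ 2 ≠ 0 ∧
    ((E : ℂ) - (G : ℂ) + 2 * Complex.I * (F : ℂ)) /
        ((E : ℂ) + (G : ℂ) + 2 * (Real.sqrt (E * G - F ^ 2) : ℂ)) =
      (Real.tanh r : ℂ) * ((a : ℂ) + Complex.I * (b : ℂ)) := by
  have hlam0 : 0 ≤ lam := by rw [hlam]; positivity
  have hlamsq : lam ^ 2 = a ^ 2 + b ^ 2 := by
    rw [hlam]; exact Real.sq_sqrt (by positivity)
  set K := Real.exp (2 * v) with hKdef
  have hK : 0 < K := Real.exp_pos _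
  have hcs : α ^ 2 = β ^ 2 + 1 := by rw [hα, hβ]; exact Real.cosh_sq r
  have hαpos : 0 < α := by rw [hα]; exact Real.cosh_pos r
  have hnn : 0 ≤ α ^ 2 - β ^ 2 * lam ^ 2 := by nlinarith [sq_nonneg β, mul_self_lt_mul_self hlam0 hlam1]
  have hkey : E * G - F ^ 2 = (K * (α ^ 2 - β ^ 2 * lam ^ 2)) ^ 2 := by
    rw [hE, hF, hG, hlamsq]; ring
  have hsqrt : Real.sqrt (E * G - F ^ 2) = K * (α ^ 2 - β ^ 2 * lam ^ 2) := by
    rw [hkey]; exact Real.sqrt_sq (by positivity)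
  refine ⟨by rw [hsqrt, hE, hG]; ring, by positivity, ?_⟩
  have htanh : Real.tanh r = β / α := by
    rw [hα, hβ]; exact Real.tanh_eq_sinh_div_cosh r
  have hα0 : (α : ℂ) ≠ 0 := by exact_mod_cast hαpos.ne'
  have hK0 : (K : ℂ) ≠ 0 := by exact_mod_cast hK.ne'
  rw [hsqrt, hE, hF, hG, htanh]
  push_cast
  rw [div_eq_iff (by
    have : ((K : ℂ) * ((α:ℂ) ^ 2 + 2 * a * α * β + (β:ℂ) ^ 2 * (lam:ℂ) ^ 2) +
        K * ((α:ℂ) ^ 2 - 2 * a * α * β + (β:ℂ) ^ 2 * (lam:ℂ) ^ 2) +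
        2 * (K * ((α:ℂ) ^ 2 - (β:ℂ) ^ 2 * (lam:ℂ) ^ 2))) = 4 * K * (α:ℂ) ^ 2 := by ring
    rw [this]
    exact mul_ne_zero (mul_ne_zero (by norm_num) hK0) (pow_ne_zero _ hα0))]
  field_simp
  ring
end

section
/- Let v', a, b, c, λ₁, λ₂ be real numbers with a + c = λ₁ + λ₂ and ac − b² = λ₁λ₂. Let s be a real number, set α = cosh s, β = sinh s, and assume α + λ₁β > 0 and α + λ₂β > 0. With E' = e^{2v'}(α² + 2aαβ + β²(a² + b²)), F' = e^{2v'}(2bαβ + bβ²(a + c)), G' = e^{2v'}(α² + 2cαβ + β²(c² + b²)), one has E' + G' + 2√(E'G' − F'²) = e^{2v'}(2α + (λ₁ + λ₂)β)². -/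
/-- `E' + G' + 2√(E'G' - F'²) = e^{2v'} (2α + (λ₁+λ₂)β)²`, given
`α + λ₁β > 0` and `α + λ₂β > 0`. -/
theorem stmt_9 (v' a b c lam1 lam2 s α β E' F' G' : ℝ)
    (hsum : a + c = lam1 + lam2) (hprod : a * c - b ^ 2 = lam1 * lam2)
    (hα : α = Real.cosh s) (hβ : β = Real.sinh s)
    (hpos1 : 0 < α + lam1 * β) (hpos2 : 0 < α + lam2 * β)
    (hE : E' = Real.exp (2 * v') * (α ^ 2 + 2 * a * α * β + β ^ 2 * (a ^ 2 + b ^ 2)))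
    (hF : F' = Real.exp (2 * v') * (2 * b * α * β + b * β ^ 2 * (a + c)))
    (hG : G' = Real.exp (2 * v') * (α ^ 2 + 2 * c * α * β + β ^ 2 * (c ^ 2 + b ^ 2))) :
    E' + G' + 2 * Real.sqrt (E' * G' - F' ^ 2) =
      Real.exp (2 * v') * (2 * α + (lam1 + lam2) * β) ^ 2 := by
  have key : E' * G' - F' ^ 2 =
      (Real.exp (2 * v') * ((α + lam1 * β) * (α + lam2 * β))) ^ 2 := by
    have key0 : E' * G' - F' ^ 2 =
        (Real.exp (2 * v') * (α ^ 2 + (a + c) * α * β + (a * c - b ^ 2) * β ^ 2)) ^ 2 := by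
      subst hE hF hG; ring
    rw [key0, hsum, hprod]; ring
  rw [key, Real.sqrt_sq (by positivity)]
  subst hE hG
  linear_combination Real.exp (2 * v') *
    ((2 * α * β + (a + c + lam1 + lam2) * β ^ 2) * hsum - 2 * β ^ 2 * hprod)
end

section
/- Let v', a, b, c, λ₁, λ₂ be real numbers with a + c = λ₁ + λ₂ and ac − b² = λ₁λ₂. Let s be a real number, set α = cosh s, β = sinh s, and assume 2α + (λ₁ + λ₂)β > 0 and α + λ₁β > 0, α + λ₂β > 0. With E' = e^{2v'}(α² + 2aαβ + β²(a² + b²)), F' = e^{2v'}(2bαβ + bβ²(a + c)), G' = e^{2v'}(α² + 2cαβ + β²(c² + b²)), one has E' − G' + 2iF' = e^{2v'}·β·(2α + (λ₁ + λ₂)β)·(a − c + 2ib), and consequently the complex dilatation μ = (E' − G' + 2iF')/(E' + G' + 2√(E'G' − F'²)) equals β(a − c + 2ib)/(2α + (λ₁ + λ₂)β). -/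
/-- `E' - G' + 2iF' = e^{2v'} β (2α + (λ₁+λ₂)β)(a - c + 2ib)`, and
hence the complex dilatation equals `β(a - c + 2ib)/(2α + (λ₁+λ₂)β)`. -/
theorem stmt_10 (v' a b c lam1 lam2 s α β E' F' G' : ℝ)
    (hsum : a + c = lam1 + lam2) (hprod : a * c - b ^ 2 = lam1 * lam2)
    (hα : α = Real.cosh s) (hβ : β = Real.sinh s)
    (hden : 0 < 2 * α + (lam1 + lam2) * β)
    (hpos1 : 0 < α + lam1 * β) (hpos2 : 0 < α + lam2 * β)
    (hE : E' = Real.exp (2 * v') * (α ^ 2 + 2 * a * α * β + β ^ 2 * (a ^ 2 + b ^ 2)))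
    (hF : F' = Real.exp (2 * v') * (2 * b * α * β + b * β ^ 2 * (a + c)))
    (hG : G' = Real.exp (2 * v') * (α ^ 2 + 2 * c * α * β + β ^ 2 * (c ^ 2 + b ^ 2))) :
    (E' : ℂ) - (G' : ℂ) + 2 * Complex.I * (F' : ℂ) =
      (Real.exp (2 * v') : ℂ) * (β : ℂ) * ((2 * α + (lam1 + lam2) * β : ℝ) : ℂ) *
        ((a : ℂ) - (c : ℂ) + 2 * Complex.I * (b : ℂ)) ∧
    ((E' : ℂ) - (G' : ℂ) + 2 * Complex.I * (F' : ℂ)) /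
        ((E' : ℂ) + (G' : ℂ) + 2 * (Real.sqrt (E' * G' - F' ^ 2) : ℂ)) =
      (β : ℂ) * ((a : ℂ) - (c : ℂ) + 2 * Complex.I * (b : ℂ)) /
        (((2 * α + (lam1 + lam2) * β : ℝ)) : ℂ) := by
  set e := Real.exp (2 * v') with he
  have hepos : (0:ℝ) < e := Real.exp_pos _
  have hsumC : (a:ℂ) + c = (lam1:ℂ) + lam2 := by exact_mod_cast hsum
  set P : ℝ := α ^ 2 + (a + c) * α * β + (a * c - b ^ 2) * β ^ 2 with hPdef
  have hPpos : 0 < P := by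
    have : P = (α + lam1 * β) * (α + lam2 * β) := by rw [hPdef, hsum, hprod]; ring
    rw [this]; exact mul_pos hpos1 hpos2
  have hdet : E' * G' - F' ^ 2 = (e * P) ^ 2 := by
    rw [hE, hF, hG, hPdef]; ring
  have hsqrt : Real.sqrt (E' * G' - F' ^ 2) = e * P := by
    rw [hdet]; exact Real.sqrt_sq (by positivity)
  have h1 : (E' : ℂ) - (G' : ℂ) + 2 * Complex.I * (F' : ℂ) =
      (e : ℂ) * (β : ℂ) * ((2 * α + (lam1 + lam2) * β : ℝ) : ℂ) *
        ((a : ℂ) - (c : ℂ) + 2 * Complex.I * (b : ℂ)) := by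
    rw [hE, hF, hG]
    push_cast
    linear_combination (e : ℂ) * (β:ℂ)^2 * ((a:ℂ) - c + 2 * Complex.I * b) * hsumC
  refine ⟨h1, ?_⟩
  have hdenom : (E' : ℂ) + (G' : ℂ) + 2 * (Real.sqrt (E' * G' - F' ^ 2) : ℂ) =
      (e : ℂ) * ((2 * α + (lam1 + lam2) * β : ℝ) : ℂ) ^ 2 := by
    rw [hsqrt, hE, hG, hPdef]
    push_cast
    linear_combination (e:ℂ) * (4 * (α:ℂ) * β + (β:ℂ)^2 * ((a:ℂ)+c+(lam1:ℂ)+lam2)) * hsumC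
  rw [h1, hdenom]
  have hK : ((2 * α + (lam1 + lam2) * β : ℝ) : ℂ) ≠ 0 := by
    exact_mod_cast hden.ne'
  have heC : (e : ℂ) ≠ 0 := by exact_mod_cast hepos.ne'
  rw [div_eq_div_iff (by exact mul_ne_zero heC (pow_ne_zero 2 hK)) hK]
  ring
end

section
/- Let 0 ≤ λ < 1 and let r₁, r₂ be distinct real numbers. Set λ₁ = (tanh r₁ − λ)/(1 − λ tanh r₁), λ₂ = (tanh r₁ + λ)/(1 + λ tanh r₁), and s = r₂ − r₁. Then |λ₂ − λ₁| / |λ₁ + λ₂ + 2·coth(s)| = λ·|tanh r₂ − tanh r₁| / (1 − λ² tanh r₁ tanh r₂). -/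
/-!
Writing `t₁ = tanh r₁`, `t₂ = tanh r₂`, the addition formulas give
`coth (r₂ - r₁) = (1 - t₁ t₂) / (t₂ - t₁)`, so the whole claim is a rational identity in
`λ, t₁, t₂`: both `λ₂ - λ₁` and `λ₁ + λ₂ + 2 coth (r₂ - r₁)` carry the common factor
`2 (1 - t₁²) / (1 - λ² t₁²)`, which cancels in the quotient. The absolute values are then
removed using `|t₁|, |t₂| < 1` and `0 ≤ λ < 1`.
-/

open Real

theorem cosh_div_sinh_sub (x y : ℝ) :
    cosh (y - x) / sinh (y - x) = (1 - tanh x * tanh y) / (tanh y - tanh x) := by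
  have hx := (cosh_pos x).ne'
  have hy := (cosh_pos y).ne'
  rw [cosh_sub, sinh_sub, tanh_eq_sinh_div_cosh, tanh_eq_sinh_div_cosh]
  field_simp

theorem principalCurvature_dilatation_eq {l t₁ : ℝ} (t₂ : ℝ) (hm : 1 - l * t₁ ≠ 0)
    (hp : 1 + l * t₁ ≠ 0) (ht₁ : 1 - t₁ ^ 2 ≠ 0) (ht : t₂ - t₁ ≠ 0) :
    ((t₁ + l) / (1 + l * t₁) - (t₁ - l) / (1 - l * t₁)) /
      ((t₁ - l) / (1 - l * t₁) + (t₁ + l) / (1 + l * t₁) + 2 * ((1 - t₁ * t₂) / (t₂ - t₁))) =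
    l * (t₂ - t₁) / (1 - l ^ 2 * t₁ * t₂) := by
  have hnum : (t₁ + l) / (1 + l * t₁) - (t₁ - l) / (1 - l * t₁) =
      2 * l * (1 - t₁ ^ 2) / ((1 - l * t₁) * (1 + l * t₁)) := by
    rw [div_sub_div _ _ hp hm, div_eq_div_iff (mul_ne_zero hp hm) (mul_ne_zero hm hp)]
    ring
  have hden : (t₁ - l) / (1 - l * t₁) + (t₁ + l) / (1 + l * t₁) +
      2 * ((1 - t₁ * t₂) / (t₂ - t₁)) =
      2 * (1 - t₁ ^ 2) * (1 - l ^ 2 * t₁ * t₂) / ((1 - l * t₁) * (1 + l * t₁) * (t₂ - t₁)) := by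
    rw [mul_div_assoc', div_add_div _ _ hm hp, div_add_div _ _ (mul_ne_zero hm hp) ht]
    ring
  rw [hnum, hden]
  rcases eq_or_ne (1 - l ^ 2 * t₁ * t₂) 0 with hc | hc
  · simp [hc]
  · field_simp

theorem abs_mul_tanh_lt_one {l : ℝ} (hl : |l| ≤ 1) (x : ℝ) : |l * tanh x| < 1 := by
  rw [abs_mul]
  exact mul_lt_one_of_nonneg_of_lt_one_right hl (abs_nonneg _) (abs_tanh_lt_one x)

theorem one_sub_sq_mul_tanh_mul_tanh_pos {l : ℝ} (hl : |l| ≤ 1) (x y : ℝ) :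
    0 < 1 - l ^ 2 * tanh x * tanh y := by
  have hprod : |l * tanh x * (l * tanh y)| < 1 := by
    rw [abs_mul]
    exact mul_lt_one_of_nonneg_of_lt_one_left (abs_nonneg _) (abs_mul_tanh_lt_one hl x)
      (abs_mul_tanh_lt_one hl y).le
  linarith [le_abs_self (l * tanh x * (l * tanh y))]

/-- the modulus of the dilatation of the normal flow between
parallel surfaces, expressed through the principal curvatures of `S(r₁)`, equals
`λ |tanh r₂ - tanh r₁| / (1 - λ² tanh r₁ tanh r₂)`. Here `coth s = cosh s / sinh s`. -/
theorem stmt_12 (lam r1 r2 : ℝ) (h0 : 0 ≤ lam) (h1 : lam < 1) (hne : r1 ≠ r2) :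
    |(Real.tanh r1 + lam) / (1 + lam * Real.tanh r1) -
        (Real.tanh r1 - lam) / (1 - lam * Real.tanh r1)| /
      |(Real.tanh r1 - lam) / (1 - lam * Real.tanh r1) +
          (Real.tanh r1 + lam) / (1 + lam * Real.tanh r1) +
          2 * (Real.cosh (r2 - r1) / Real.sinh (r2 - r1))| =
    lam * |Real.tanh r2 - Real.tanh r1| /
      (1 - lam ^ 2 * Real.tanh r1 * Real.tanh r2) := by
  have hlam : |lam| ≤ 1 := (abs_of_nonneg h0).trans_le h1.le
  have hlt := abs_lt.mp (abs_mul_tanh_lt_one hlam r1)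
  have hm : 1 - lam * tanh r1 ≠ 0 := by linarith
  have hp : 1 + lam * tanh r1 ≠ 0 := by linarith
  have ht₁ : 1 - tanh r1 ^ 2 ≠ 0 := by linarith [tanh_sq_lt_one r1]
  have ht : tanh r2 - tanh r1 ≠ 0 := sub_ne_zero.mpr (tanh_injective.ne hne.symm)
  rw [cosh_div_sinh_sub, ← abs_div, principalCurvature_dilatation_eq _ hm hp ht₁ ht, abs_div,
    abs_mul, abs_of_nonneg h0, abs_of_pos (one_sub_sq_mul_tanh_mul_tanh_pos hlam r1 r2)]
end

section
/- Let 0 ≤ λ₀ < 1 and let r₁, r₂ be distinct real numbers. Then λ₀·|tanh r₂ − tanh r₁| / (1 − λ₀² tanh r₁ tanh r₂) < |tanh(r₂ − r₁)| < 1. (Hence the normal-flow map from S(r₁) to S(r₂) is k-quasiconformal with k = λ₀|tanh r₂ − tanh r₁|/(1 − λ₀² tanh r₁ tanh r₂) < 1.) -/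
/-!
Put `t₁ = tanh r₁`, `t₂ = tanh r₂` and `p = t₁ t₂`, so `|p| < 1`. The subtraction formula gives
`|tanh (r₂ - r₁)| = |t₂ - t₁| / (1 - p)`, and `t₂ ≠ t₁` because `tanh` is injective. The claim then
reduces to `λ₀ (1 - p) < 1 - λ₀² p`, which holds because the difference is `(1 - λ₀)(1 + λ₀ p) > 0`.
-/

open Real

theorem Real.tanh_sub (x y : ℝ) :
    tanh (x - y) = (tanh x - tanh y) / (1 - tanh x * tanh y) := by
  have hx := (cosh_pos x).ne'
  have hy := (cosh_pos y).ne'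
  have hxy : cosh x * cosh y - sinh x * sinh y ≠ 0 := by
    rw [← cosh_sub]
    exact (cosh_pos _).ne'
  rw [tanh_eq_sinh_div_cosh, tanh_eq_sinh_div_cosh, tanh_eq_sinh_div_cosh, sinh_sub, cosh_sub]
  field_simp

theorem abs_mul_lt_one_of_abs_le_of_abs_lt {a b : ℝ} (ha : |a| ≤ 1) (hb : |b| < 1) :
    |a * b| < 1 := by
  rw [abs_mul]
  nlinarith [abs_nonneg a, abs_nonneg b]

theorem one_sub_mul_pos_of_abs_le_of_abs_lt {a b : ℝ} (ha : |a| ≤ 1) (hb : |b| < 1) :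
    0 < 1 - a * b := by
  linarith [le_abs_self (a * b), abs_mul_lt_one_of_abs_le_of_abs_lt ha hb]

theorem Real.abs_tanh_sub (x y : ℝ) :
    |tanh (x - y)| = |tanh x - tanh y| / (1 - tanh x * tanh y) := by
  rw [tanh_sub, abs_div, abs_of_pos <|
    one_sub_mul_pos_of_abs_le_of_abs_lt (abs_tanh_lt_one x).le (abs_tanh_lt_one y)]

theorem mul_one_sub_lt_one_sub_sq_mul {l p : ℝ} (h0 : 0 ≤ l) (h1 : l < 1) (hp : |p| < 1) :
    l * (1 - p) < 1 - l ^ 2 * p := by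
  have hlp : 0 < 1 + l * p := by
    have := abs_mul_lt_one_of_abs_le_of_abs_lt (by rw [abs_of_nonneg h0]; exact h1.le) hp
    linarith [neg_abs_le (l * p)]
  nlinarith [mul_pos (sub_pos.2 h1) hlp]

theorem mul_div_one_sub_sq_mul_lt_div_one_sub {l p d : ℝ} (h0 : 0 ≤ l) (h1 : l < 1) (hp : |p| < 1)
    (hd : 0 < d) : l * d / (1 - l ^ 2 * p) < d / (1 - p) := by
  have hl2 : |l ^ 2| ≤ 1 := by
    rw [abs_of_nonneg (sq_nonneg l)]
    nlinarith
  rw [div_lt_div_iff₀ (one_sub_mul_pos_of_abs_le_of_abs_lt hl2 hp)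
    (by simpa using one_sub_mul_pos_of_abs_le_of_abs_lt (a := 1) (by simp) hp)]
  nlinarith [mul_one_sub_lt_one_sub_sq_mul h0 h1 hp]

/-- for `0 ≤ λ₀ < 1` and `r₁ ≠ r₂`,
`λ₀ |tanh r₂ - tanh r₁| / (1 - λ₀² tanh r₁ tanh r₂) < |tanh (r₂ - r₁)| < 1`. -/
theorem stmt_14 (lam0 r1 r2 : ℝ) (h0 : 0 ≤ lam0) (h1 : lam0 < 1) (hne : r1 ≠ r2) :
    lam0 * |Real.tanh r2 - Real.tanh r1| /
        (1 - lam0 ^ 2 * Real.tanh r1 * Real.tanh r2) <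
      |Real.tanh (r2 - r1)| ∧
    |Real.tanh (r2 - r1)| < 1 := by
  refine ⟨?_, abs_tanh_lt_one _⟩
  have hp : |tanh r1 * tanh r2| < 1 :=
    abs_mul_lt_one_of_abs_le_of_abs_lt (abs_tanh_lt_one r1).le (abs_tanh_lt_one r2)
  have hd : 0 < |tanh r2 - tanh r1| := abs_pos.2 (sub_ne_zero.2 (tanh_injective.ne hne.symm))
  rw [abs_tanh_sub, mul_comm (tanh r2), mul_assoc]
  exact mul_div_one_sub_sq_mul_lt_div_one_sub h0 h1 hp hd
end
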